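/- Let N ≥ 3 be a natural number and let α > 1/(N−1) be a real number. Consider the set of real numbers of the form (a_{10}+a_{11})·∏_{i=2}^N a_{i0} + Σ_{i=2}^N (α·a_{10}−a_{11})·a_{i1}, where all variables a_{10}, a_{11}, a_{i0}, a_{i1} range over {−1, 1}. Then (N−1)(α+1) is the greatest element of this set (it is an upper bound and it is attained). -/
import Mathlib


open BigOperators Finset

set_option maxHeartbeats 1000000 in
/-- Classical (local hidden variable) bound, regime `α > 1/(N−1)`:
`(N−1)(α+1)` is the greatest value of the Bell expression over deterministic
`±1`-assignments. -/
theorem lhv_bound_large_alpha (N : ℕ) (hN : 3 ≤ N) (α : ℝ)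
    (hα : 1 / ((N : ℝ) - 1) < α) :
    IsGreatest
      { x : ℝ | ∃ a : Fin N → Fin 2 → ℝ,
          (∀ i j, a i j = 1 ∨ a i j = -1) ∧
          x = (a ⟨0, by omega⟩ 0 + a ⟨0, by omega⟩ 1)
                * ∏ i ∈ univ.filter (fun i : Fin N => i ≠ ⟨0, by omega⟩), a i 0
              + ∑ i ∈ univ.filter (fun i : Fin N => i ≠ ⟨0, by omega⟩),
                  (α * a ⟨0, by omega⟩ 0 - a ⟨0, by omega⟩ 1) * a i 1 }
      (((N : ℝ) - 1) * (α + 1)) := by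
  have hN3 : (3:ℝ) ≤ (N:ℝ) := by exact_mod_cast hN
  have hN0 : (0:ℝ) < (N:ℝ) - 1 := by linarith
  have hN2 : (2:ℝ) ≤ (N:ℝ) - 1 := by linarith
  have hcard : (univ.filter (fun i : Fin N => i ≠ ⟨0, by omega⟩)).card = N - 1 := by
    rw [filter_ne']
    rw [card_erase_of_mem (mem_univ _), card_univ, Fintype.card_fin]
  have hcardR : ((univ.filter (fun i : Fin N => i ≠ ⟨0, by omega⟩)).card : ℝ)
      = (N:ℝ) - 1 := by
    rw [hcard, Nat.cast_sub (by omega)]; norm_num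
  have halpha : 1 < α * ((N:ℝ) - 1) := by
    have := (div_lt_iff₀ hN0).mp hα
    linarith
  have hαpos : 0 < α := lt_trans (by positivity) hα
  constructor
  · refine ⟨fun i j => if j = 0 then 1 else if i = ⟨0, by omega⟩ then -1 else 1, ?_, ?_⟩
    · intro i j
      by_cases h1 : j = 0
      · left; simp [h1]
      · by_cases h2 : i = (⟨0, by omega⟩ : Fin N)
        · right; simp [h1, h2]
        · left; simp [h1, h2]
    · have e1 : (if (0 : Fin 2) = 0 then (1:ℝ) else
          if (⟨0, by omega⟩ : Fin N) = ⟨0, by omega⟩ then -1 else 1) = 1 := by norm_num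
      have e2 : (if (1 : Fin 2) = 0 then (1:ℝ) else
          if (⟨0, by omega⟩ : Fin N) = ⟨0, by omega⟩ then -1 else 1) = -1 := by norm_num
      beta_reduce
      rw [e1, e2]
      have hsum : (∑ i ∈ univ.filter (fun i : Fin N => i ≠ ⟨0, by omega⟩),
          (α * 1 - -1) * (if (1 : Fin 2) = 0 then (1:ℝ)
            else if i = ⟨0, by omega⟩ then -1 else 1))
          = ((N:ℝ) - 1) * (α + 1) := by
        have hc : ∀ i ∈ univ.filter (fun i : Fin N => i ≠ (⟨0, by omega⟩ : Fin N)),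
            (α * 1 - -1) * (if (1 : Fin 2) = 0 then (1:ℝ)
              else if i = ⟨0, by omega⟩ then -1 else 1) = α + 1 := by
          intro i hi
          simp only [mem_filter, mem_univ, true_and] at hi
          rw [if_neg (by norm_num : ¬ (1 : Fin 2) = 0), if_neg hi]
          ring
        rw [Finset.sum_congr rfl hc, sum_const, nsmul_eq_mul, hcardR]
      rw [hsum]
      ring
  · rintro x ⟨a, h, rfl⟩
    set s := univ.filter (fun i : Fin N => i ≠ (⟨0, by omega⟩ : Fin N)) with hsdef
    set P := ∏ i ∈ s, a i 0 with hPdef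
    have habs : |P| = 1 := by
      rw [hPdef, abs_prod]
      exact prod_eq_one fun i _ => by rcases h i 0 with h' | h' <;> simp [h']
    have hP1 : P ≤ 1 := le_of_abs_le habs.le
    have hP2 : -1 ≤ P := neg_le_of_abs_le habs.le
    have hdiv : ((N:ℝ) - 1) * (2 / ((N:ℝ) - 1)) = 2 := by
      field_simp
    have hdiv1 : 2 / ((N:ℝ) - 1) ≤ 1 := by
      rw [div_le_one hN0]; linarith
    have hdiv2 : 2 / ((N:ℝ) - 1) ≤ 2 * α := by
      rw [div_le_iff₀ hN0]; nlinarith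
    have hkey : ((N:ℝ) - 1) * (α + 1 - 2 / ((N:ℝ) - 1)) = ((N:ℝ) - 1) * (α + 1) - 2 := by
      rw [mul_sub, hdiv]
    rcases h ⟨0, by omega⟩ 0 with ha0 | ha0 <;> rcases h ⟨0, by omega⟩ 1 with ha1 | ha1 <;>
        rw [ha0, ha1]
    · -- a10 = 1, a11 = 1
      have hsum : ∑ i ∈ s, (α * 1 - 1) * a i 1
          ≤ s.card • (α + 1 - 2 / ((N:ℝ) - 1)) := by
        refine sum_le_card_nsmul _ _ _ fun i _ => ?_
        rcases h i 1 with h' | h' <;> rw [h'] <;> nlinarith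
      rw [nsmul_eq_mul, hcardR, hkey] at hsum
      nlinarith
    · -- a10 = 1, a11 = -1
      have hsum : ∑ i ∈ s, (α * 1 - (-1)) * a i 1 ≤ s.card • (α + 1) := by
        refine sum_le_card_nsmul _ _ _ fun i _ => ?_
        rcases h i 1 with h' | h' <;> rw [h'] <;> nlinarith
      rw [nsmul_eq_mul, hcardR] at hsum
      nlinarith
    · -- a10 = -1, a11 = 1
      have hsum : ∑ i ∈ s, (α * (-1) - 1) * a i 1 ≤ s.card • (α + 1) := by
        refine sum_le_card_nsmul _ _ _ fun i _ => ?_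
        rcases h i 1 with h' | h' <;> rw [h'] <;> nlinarith
      rw [nsmul_eq_mul, hcardR] at hsum
      nlinarith
    · -- a10 = -1, a11 = -1
      have hsum : ∑ i ∈ s, (α * (-1) - (-1)) * a i 1
          ≤ s.card • (α + 1 - 2 / ((N:ℝ) - 1)) := by
        refine sum_le_card_nsmul _ _ _ fun i _ => ?_
        rcases h i 1 with h' | h' <;> rw [h'] <;> nlinarith
      rw [nsmul_eq_mul, hcardR, hkey] at hsum
      nlinarith
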